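/- Fix an integer n ≥ 2, set b := -n + i, and let D = {0, m} with 2 ≤ m ≤ n². Let (α_j)_{j≥1} be a sequence with α_j ∈ {0, m, -m} for all j, set α := π((α_j)), and assume the radix expansion of α in base (b, {0, ±m}) is unique: for every sequence (β_j)_{j≥1} with β_j ∈ {0, m, -m} for all j and π((β_j)) = α, one has β_j = α_j for all j. Let γ_j := min(D ∩ (D + α_j)) for each j and γ := π((γ_j)). Then (C_{n,D} ∩ (C_{n,D} + α)) − γ = {π((z_j)) : z_j ∈ {0, m} and z_j ≤ m − |α_j| for all j}, and moreover (C_{n,D} ∩ (C_{n,D} + α)) − γ ⊆ C_{n,D}. -/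

import Mathlib

open Complex Filter Pointwise

/-- `piSum b d = ∑_{j≥1} d_j b^{-j}` (0-indexed: `d j` is the `(j+1)`-st digit). -/
noncomputable def piSum (b : ℂ) (d : ℕ → ℤ) : ℂ :=
  ∑' j : ℕ, (d j : ℂ) * b ^ (-((j : ℤ) + 1))

/-- The restricted digit set `C_{n,D}`. -/
def restrictedDigitSet (n : ℕ) (D : Set ℤ) : Set ℂ :=
  {z | ∃ d : ℕ → ℤ, (∀ j, d j ∈ D) ∧ z = piSum (-(n : ℂ) + Complex.I) d}

/-
If `π d = π e + π α` with all digits of `d` and `e` in `{0, m}`, then `d - e` is an expansion of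
`π α` with digits in `{0, m} - {0, m} = {0, ±m}`, so uniqueness forces `d_j - e_j = α_j`. Hence
`C ∩ (C + π α)` is the set of `π d` with `d_j ∈ {0, m} ∩ ({0, m} + α_j)` for every `j`, and the
claim becomes a check on a single digit: `γ_j = max α_j 0`, and `d_j - γ_j` ranges over `{0, m}`
when `α_j = 0` and is `0` otherwise.
-/

theorem summable_piSum_terms {b : ℂ} (hb : 1 < ‖b‖) {d : ℕ → ℤ} {M : ℤ} (hd : ∀ j, |d j| ≤ M) :
    Summable fun j : ℕ => (d j : ℂ) * b ^ (-((j : ℤ) + 1)) := by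
  have hr : ‖b‖⁻¹ < 1 := inv_lt_one_of_one_lt₀ hb
  refine .of_norm_bounded ((summable_geometric_of_lt_one (by positivity) hr).mul_left (M : ℝ))
    fun j => ?_
  have hdj : |(d j : ℝ)| ≤ M := by exact_mod_cast hd j
  rw [norm_mul, norm_zpow, Complex.norm_intCast, neg_add', zpow_sub₀ (by positivity), zpow_neg,
    zpow_natCast, zpow_one, ← inv_pow]
  calc |(d j : ℝ)| * (‖b‖⁻¹ ^ j / ‖b‖) ≤ |(d j : ℝ)| * ‖b‖⁻¹ ^ j := by
        gcongr; exact div_le_self (by positivity) hb.le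
    _ ≤ M * ‖b‖⁻¹ ^ j := by gcongr

theorem piSum_sub {b : ℂ} (hb : 1 < ‖b‖) {d e : ℕ → ℤ} {M N : ℤ} (hd : ∀ j, |d j| ≤ M)
    (he : ∀ j, |e j| ≤ N) : piSum b (d - e) = piSum b d - piSum b e := by
  rw [piSum, piSum, piSum, ← (summable_piSum_terms hb hd).tsum_sub (summable_piSum_terms hb he)]
  push_cast [Pi.sub_apply, sub_mul]
  rfl

theorem setOf_piSum_sub_singleton_piSum {b : ℂ} (hb : 1 < ‖b‖) {E : ℕ → Set ℤ} {M N : ℤ}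
    (hE : ∀ j, ∀ x ∈ E j, |x| ≤ M) {γ : ℕ → ℤ} (hγ : ∀ j, |γ j| ≤ N) :
    {z | ∃ d : ℕ → ℤ, (∀ j, d j ∈ E j) ∧ z = piSum b d} - {piSum b γ} =
      {z | ∃ d : ℕ → ℤ, (∀ j, d j + γ j ∈ E j) ∧ z = piSum b d} := by
  ext z
  constructor
  · rintro ⟨_, ⟨d, hd, rfl⟩, _, rfl, rfl⟩
    refine ⟨d - γ, fun j => by simpa using hd j, ?_⟩
    exact (piSum_sub hb (fun j => hE j _ (hd j)) hγ).symm
  · rintro ⟨d, hd, rfl⟩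
    refine ⟨piSum b (d + γ), ⟨d + γ, hd, rfl⟩, piSum b γ, rfl, ?_⟩
    change piSum b (d + γ) - piSum b γ = piSum b d
    rw [← piSum_sub (d := d + γ) hb (fun j => hE j _ (hd j)) hγ, add_sub_cancel_right]

theorem one_lt_norm_neg_natCast_add_I {n : ℕ} (hn : n ≠ 0) : 1 < ‖-(n : ℂ) + I‖ := by
  rw [← one_lt_sq_iff₀ (norm_nonneg _), Complex.sq_norm, Complex.normSq_apply]
  have : (1 : ℝ) ≤ n := by exact_mod_cast Nat.one_le_iff_ne_zero.mpr hn
  simp only [add_re, neg_re, natCast_re, I_re, add_im, neg_im, natCast_im, I_im]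
  nlinarith

theorem restrictedDigitSet_inter_add_piSum {n : ℕ} (hn : n ≠ 0) {D : Set ℤ} {M : ℤ}
    (hD : ∀ x ∈ D, |x| ≤ M) {α : ℕ → ℤ}
    (huniq : ∀ β : ℕ → ℤ, (∀ j, β j ∈ D - D) →
      piSum (-(n : ℂ) + I) β = piSum (-(n : ℂ) + I) α → ∀ j, β j = α j) :
    restrictedDigitSet n D ∩ (restrictedDigitSet n D + {piSum (-(n : ℂ) + I) α}) =
      {z | ∃ d : ℕ → ℤ, (∀ j, d j ∈ D ∩ (D + {α j})) ∧ z = piSum (-(n : ℂ) + I) d} := by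
  have hb := one_lt_norm_neg_natCast_add_I hn
  ext z
  constructor
  · rintro ⟨⟨d, hdD, rfl⟩, _, ⟨e, heD, rfl⟩, _, rfl, hsum⟩
    have hde : ∀ j, d j - e j = α j := by
      refine huniq (d - e) (fun j => Set.sub_mem_sub (hdD j) (heD j)) ?_
      rw [piSum_sub hb (fun j => hD _ (hdD j)) (fun j => hD _ (heD j))]
      linear_combination -hsum
    exact ⟨d, fun j => ⟨hdD j, e j, heD j, α j, rfl, by linarith [hde j]⟩, rfl⟩
  · rintro ⟨d, hd, rfl⟩
    have heD : ∀ j, (d - α) j ∈ D := fun j => by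
      obtain ⟨x, hx, _, rfl, hxa⟩ := (hd j).2
      rwa [Pi.sub_apply, ← hxa, add_sub_cancel_right]
    refine ⟨⟨d, fun j => (hd j).1, rfl⟩, _, ⟨d - α, heD, rfl⟩, _, rfl, ?_⟩
    rw [← sub_sub_cancel d α, piSum_sub hb (fun j => hD _ (hd j).1) (fun j => hD _ (heD j)),
      sub_sub_cancel]
    ring

theorem mem_pair_add_singleton {m a x : ℤ} :
    x ∈ ({0, m} : Set ℤ) + {a} ↔ x - a = 0 ∨ x - a = m := by
  simp only [Set.add_singleton, Set.image_insert_eq, Set.image_singleton, Set.mem_insert_iff,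
    Set.mem_singleton_iff]
  omega

theorem isLeast_pair_inter_pair_add_singleton {m a : ℤ} (hm : 0 ≤ m)
    (ha : a ∈ ({0, m, -m} : Set ℤ)) :
    IsLeast (({0, m} : Set ℤ) ∩ ({0, m} + {a})) (max a 0) := by
  simp only [Set.mem_insert_iff, Set.mem_singleton_iff] at ha
  refine ⟨?_, fun x hx => ?_⟩ <;>
    simp only [Set.mem_inter_iff, mem_pair_add_singleton, Set.mem_insert_iff,
      Set.mem_singleton_iff] at * <;>
    omega

theorem add_max_mem_pair_inter_pair_add_singleton_iff {m a : ℤ} (hm : 0 ≤ m)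
    (ha : a ∈ ({0, m, -m} : Set ℤ)) (z : ℤ) :
    z + max a 0 ∈ ({0, m} : Set ℤ) ∩ ({0, m} + {a}) ↔ (z = 0 ∨ z = m) ∧ z ≤ m - |a| := by
  simp only [Set.mem_inter_iff, mem_pair_add_singleton, Set.mem_insert_iff,
    Set.mem_singleton_iff] at ha ⊢
  rcases ha with rfl | rfl | rfl <;> simp only [abs_neg, abs_zero, abs_of_nonneg hm] <;> omega

theorem pair_sub_pair (m : ℤ) : ({0, m} : Set ℤ) - {0, m} = {0, m, -m} := by
  ext x
  simp only [Set.mem_sub, Set.mem_insert_iff, Set.mem_singleton_iff]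
  constructor
  · rintro ⟨y, hy, z, hz, rfl⟩; omega
  · rintro (h | h | h) <;> subst x
    exacts [⟨0, by simp, 0, by simp, by simp⟩, ⟨m, by simp, 0, by simp, by simp⟩,
      ⟨0, by simp, m, by simp, by simp⟩]

theorem stmt_15 (n : ℕ) (hn : 2 ≤ n) (m : ℤ) (hm : 2 ≤ m ∧ m ≤ (n : ℤ) ^ 2)
    (α : ℕ → ℤ) (hα : ∀ j, α j ∈ ({0, m, -m} : Set ℤ))
    (huniq : ∀ β : ℕ → ℤ, (∀ j, β j ∈ ({0, m, -m} : Set ℤ)) →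
      piSum (-(n : ℂ) + Complex.I) β = piSum (-(n : ℂ) + Complex.I) α →
      ∀ j, β j = α j)
    (γ : ℕ → ℤ)
    (hγ : ∀ j, IsLeast (({0, m} : Set ℤ) ∩ (({0, m} : Set ℤ) + {α j})) (γ j)) :
    (restrictedDigitSet n {0, m} ∩
        (restrictedDigitSet n {0, m} + {piSum (-(n : ℂ) + Complex.I) α})) -
        {piSum (-(n : ℂ) + Complex.I) γ} =
      {z | ∃ zs : ℕ → ℤ, (∀ j, (zs j = 0 ∨ zs j = m) ∧ zs j ≤ m - |α j|) ∧
        z = piSum (-(n : ℂ) + Complex.I) zs} ∧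
    (restrictedDigitSet n {0, m} ∩
        (restrictedDigitSet n {0, m} + {piSum (-(n : ℂ) + Complex.I) α})) -
        {piSum (-(n : ℂ) + Complex.I) γ} ⊆
      restrictedDigitSet n {0, m} := by
  have hm0 : 0 ≤ m := by omega
  have hpair : ∀ x ∈ ({0, m} : Set ℤ), |x| ≤ m := by
    rintro x (rfl | rfl) <;> simp [abs_of_nonneg hm0, hm0]
  have hγα : ∀ j, γ j = max (α j) 0 :=
    fun j => (hγ j).unique (isLeast_pair_inter_pair_add_singleton hm0 (hα j))
  refine (fun heq => ⟨heq, heq.trans_subset ?_⟩) ?_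
  · rw [restrictedDigitSet_inter_add_piSum (by omega) hpair (by rwa [pair_sub_pair]),
      setOf_piSum_sub_singleton_piSum (one_lt_norm_neg_natCast_add_I (by omega))
        (fun j x hx => hpair x hx.1) (fun j => hpair _ (hγ j).1.1)]
    simp_rw [hγα, add_max_mem_pair_inter_pair_add_singleton_iff hm0 (hα _)]
  · rintro _ ⟨zs, hzs, rfl⟩
    exact ⟨zs, fun j => (hzs j).1, rfl⟩
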